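/- arXiv:1610.09829 — 2 statements merged into one kernel-verified Lean document; each statement's English description precedes it below -/
import Mathlib

section
/- Every finite p-group P admits a finite presentation ⟨X | R⟩ such that for every generator x ∈ X and every relator r ∈ R, the exponent sum of x in r is congruent to 0 modulo p. -/
/-- Exponent sum of the generator `x` in the word `w` of the free group. -/
def expSum {α : Type*} [DecidableEq α] (x : α) (w : FreeGroup α) : ℤ :=
  ((FreeGroup.toWord w).map (fun p => if p.1 = x then (if p.2 then (1:ℤ) else -1) else 0)).sum

/-!
Choose generators `g₁, …, gₙ` of `P` with `n` minimal. Then the `gⱼ` with `j ≠ i` generate a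
proper subgroup, contained in a maximal subgroup `Mᵢ` with `gᵢ ∉ Mᵢ`; in a finite `p`-group
`Mᵢ` is normal of index `p`. The composite `F⟨x₁, …, xₙ⟩ → P → P ⧸ Mᵢ` kills every `xⱼ` with
`j ≠ i`, so it maps a word `w` to `gᵢ ^ μ_{xᵢ}(w)`, and `gᵢ` has order `p` in `P ⧸ Mᵢ`: hence
`p ∣ μ_{xᵢ}(w)` for every `w` in the kernel. That kernel has finite index in a finitely
generated group, so by Schreier's lemma it is finitely generated, and any finite generating
set of it serves as the set of relators.
-/

open Subgroup

section ExpSum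

variable {α : Type*} [DecidableEq α]

def expSumHom (x : α) : FreeGroup α →* Multiplicative ℤ :=
  FreeGroup.lift fun a => .ofAdd (if a = x then 1 else 0)

theorem toAdd_expSumHom (x : α) (w : FreeGroup α) : (expSumHom x w).toAdd = expSum x w := by
  rw [expSum, ← FreeGroup.mk_toWord (x := w), expSumHom, FreeGroup.lift_mk, FreeGroup.toWord_mk,
    FreeGroup.reduce_toWord]
  induction w.toWord with
  | nil => rfl
  | cons a L ih =>
    obtain ⟨y, b⟩ := a
    cases b <;> by_cases h : y = x <;> simp_all

theorem FreeGroup.hom_apply_eq_zpow_expSum {G : Type*} [Group G] (f : FreeGroup α →* G)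
    {x : α} (hf : ∀ y ≠ x, f (of y) = 1) (w : FreeGroup α) : f w = f (of x) ^ expSum x w := by
  have hfactor : f = (zpowersHom G (f (of x))).comp (expSumHom x) := by
    refine FreeGroup.ext_hom _ _ fun y => ?_
    by_cases h : y = x
    · subst h
      simp [expSumHom]
    · simp [expSumHom, h, hf y h]
  rw [DFunLike.congr_fun hfactor w, MonoidHom.comp_apply, zpowersHom_apply, toAdd_expSumHom]

end ExpSum

theorem QuotientGroup.eq_bot_or_eq_top_of_isCoatom {G : Type*} [Group G] {M : Subgroup G}
    [M.Normal] (hM : IsCoatom M) (H : Subgroup (G ⧸ M)) : H = ⊥ ∨ H = ⊤ :=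
  have : IsSimpleOrder (Subgroup (G ⧸ M)) :=
    (OrderIso.isSimpleOrder_iff (β := Set.Ici M) (comapMk'OrderIso M)).mpr
      (Set.isSimpleOrder_Ici_iff_isCoatom.mpr hM)
  eq_bot_or_eq_top H

theorem Subgroup.exists_isCoatom_separating {G ι : Type*} [Group G] [IsCoatomic (Subgroup G)]
    {g : ι → G} (hg : Subgroup.closure (Set.range g) = ⊤) {i : ι}
    (hi : Subgroup.closure (g '' {i}ᶜ) ≠ ⊤) :
    ∃ M : Subgroup G, IsCoatom M ∧ g i ∉ M ∧ ∀ j ≠ i, g j ∈ M := by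
  obtain ⟨M, hM, hle⟩ := (eq_top_or_exists_le_coatom _).resolve_left hi
  have hj : ∀ j ≠ i, g j ∈ M := fun j hj => hle (subset_closure ⟨j, hj, rfl⟩)
  refine ⟨M, hM, fun hgi => hM.1 (top_le_iff.mp (hg ▸ (Subgroup.closure_le _).mpr ?_)), hj⟩
  rintro _ ⟨j, rfl⟩
  by_cases h : j = i
  · exact h ▸ hgi
  · exact hj j h

theorem Group.exists_irredundant_generators (G : Type*) [Group G] [Group.FG G] :
    ∃ (n : ℕ) (g : Fin n → G),
      Subgroup.closure (Set.range g) = ⊤ ∧ ∀ i, Subgroup.closure (g '' {i}ᶜ) ≠ ⊤ := by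
  classical
  obtain ⟨S, hcard, hS⟩ := Group.rank_spec G
  let g : Fin S.card → G := fun i => S.equivFin.symm i
  have hg : Function.Injective g := Subtype.val_injective.comp S.equivFin.symm.injective
  have hrange : Set.range g = S := by
    rw [Set.range_comp' Subtype.val, Equiv.range_eq_univ, Set.image_univ, Subtype.range_coe]
  refine ⟨S.card, g, hrange ▸ hS, fun i hi => ?_⟩
  have herase : g '' {i}ᶜ = ↑(S.erase (g i)) := by
    rw [Finset.coe_erase, ← hrange, Set.image_compl_eq_range_sdiff_image hg, Set.image_singleton]
  have hrank_le := Group.rank_le (herase ▸ hi)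
  have hlt : (S.erase (g i)).card < S.card := Finset.card_erase_lt_of_mem (S.equivFin.symm i).2
  omega

namespace IsPGroup

variable {p : ℕ} [Fact p.Prime] {P : Type*} [Group P] [Finite P]

theorem normal_of_isCoatom (hP : IsPGroup p P) {M : Subgroup P} (hM : IsCoatom M) : M.Normal :=
  have := hP.isNilpotent
  NormalizerCondition.normal_of_coatom M Group.normalizerCondition_of_isNilpotent hM

theorem card_quotient_of_isCoatom (hP : IsPGroup p P) {M : Subgroup P} [M.Normal]
    (hM : IsCoatom M) : Nat.card (P ⧸ M) = p := by
  have : Nontrivial (P ⧸ M) := QuotientGroup.nontrivial_iff.mpr hM.1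
  obtain ⟨g, hg⟩ := exists_prime_orderOf_dvd_card' p
    ((hP.to_quotient M).card_eq_or_dvd.resolve_left Finite.one_lt_card.ne')
  have hg1 : g ≠ 1 := by
    rintro rfl
    exact (Fact.out : p.Prime).one_lt.ne' (hg ▸ orderOf_one)
  rw [← hg, ← Nat.card_zpowers,
    (QuotientGroup.eq_bot_or_eq_top_of_isCoatom hM _).resolve_left (zpowers_ne_bot.mpr hg1),
    card_top]

theorem exists_generators_forall_mem_ker_dvd_expSum (hP : IsPGroup p P) :
    ∃ (n : ℕ) (g : Fin n → P), Subgroup.closure (Set.range g) = ⊤ ∧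
      ∀ w ∈ (FreeGroup.lift g).ker, ∀ i, (p : ℤ) ∣ expSum i w := by
  obtain ⟨n, g, hg, hirr⟩ := Group.exists_irredundant_generators P
  refine ⟨n, g, hg, fun w hw i => ?_⟩
  obtain ⟨M, hM, hgi, hgj⟩ := exists_isCoatom_separating hg (hirr i)
  have := hP.normal_of_isCoatom hM
  let f := (QuotientGroup.mk' M).comp (FreeGroup.lift g)
  have hf : ∀ j ≠ i, f (.of j) = 1 := fun j hj => by simpa [f] using hgj j hj
  have hord : orderOf (f (.of i)) = p :=
    orderOf_eq_prime (hP.card_quotient_of_isCoatom hM ▸ pow_card_eq_one') (by simpa [f] using hgi)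
  rw [← hord, orderOf_dvd_iff_zpow_eq_one, ← FreeGroup.hom_apply_eq_zpow_expSum f hf]
  simp [f, MonoidHom.mem_ker.mp hw]

end IsPGroup

/-- Every finite `p`-group `P` has a finite presentation `⟨X ∣ R⟩` such that the exponent sum
of every generator in every relator is divisible by `p`. -/
theorem finite_pGroup_has_presentation_with_expSum_div_p
    (p : ℕ) (hp : p.Prime) (P : Type*) [Group P] [Finite P] (hP : IsPGroup p P) :
    ∃ (n : ℕ) (R : Finset (FreeGroup (Fin n))) (γ : FreeGroup (Fin n) →* P),
      Function.Surjective γ ∧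
      γ.ker = Subgroup.normalClosure (R : Set (FreeGroup (Fin n))) ∧
      ∀ r ∈ R, ∀ x : Fin n, (p : ℤ) ∣ expSum x r := by
  have := Fact.mk hp
  obtain ⟨n, g, hg, hdvd⟩ := hP.exists_generators_forall_mem_ker_dvd_expSum
  have hγ : Function.Surjective (FreeGroup.lift g) :=
    MonoidHom.range_eq_top.mp (by rw [FreeGroup.range_lift_eq_closure, hg])
  -- `Group.FG` of the kernel is Schreier's lemma, found by instance search.
  obtain ⟨S, hSfin, hS⟩ := IsFinitelyNormallyGenerated.of_FG (FreeGroup.lift g).ker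
  refine ⟨n, hSfin.toFinset, FreeGroup.lift g, hγ, by rw [hSfin.coe_toFinset, hS],
    fun r hr => hdvd r ?_⟩
  rw [← hS]
  exact subset_normalClosure (hSfin.mem_toFinset.mp hr)
end

section
/- (Gaschütz) Let p be a prime, G a finite group, V a normal abelian p-subgroup of G, and P a Sylow p-subgroup of G. Then G splits over V (i.e., V has a complement in G) if and only if P splits over V. -/
/-!
If `U` complements `V` in `P`, pick representatives `s x ∈ xV` of the cosets of `V` with
`s (x * u) = s x * u` for `u ∈ U`. Comparing the translate `g • s` with `s` on one coset of `P`
at a time gives `δ g = ∏_{xP} g * s (g⁻¹ * x) * (s x)⁻¹ ∈ V`, which is well defined thanks to the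
`U`-equivariance of `s`. Then `δ` is a crossed homomorphism `G → V` with `δ v = v ^ |G : P|` on
`V`, and since `|G : P|` is prime to `|V|` its kernel `{g | δ g = 1}` complements `V` in `G`.
Conversely, a complement `C` of `V` in `G` gives the complement `C ⊓ P` of `V` in `P` by
Dedekind's modular law.
-/

open scoped IsMulCommutative Pointwise

namespace Subgroup

variable {G : Type*} [Group G]

theorem normal_sup_inf_of_le {N P : Subgroup G} [N.Normal] (K : Subgroup G) (hNP : N ≤ P) :
    N ⊔ K ⊓ P = (N ⊔ K) ⊓ P :=
  SetLike.coe_injective <| by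
    rw [normal_mul, mul_inf_assoc _ _ _ hNP, coe_inf, normal_mul]

section CrossedHom

variable {V : Subgroup G} [V.Normal] {δ : G → V}
  (hδ : ∀ g h, δ (g * h) = MulAut.conjNormal g (δ h) * δ g)

include hδ in
theorem crossedHom_map_one : δ 1 = 1 := by
  simpa using hδ 1 1

def crossedHomKer : Subgroup G where
  carrier := {g | δ g = 1}
  one_mem' := crossedHom_map_one hδ
  mul_mem' {g h} (hg : δ g = 1) (hh : δ h = 1) := by
    simp [hδ, hg, hh]
  inv_mem' {g} (hg : δ g = 1) := by
    have h := hδ g g⁻¹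
    rwa [mul_inv_cancel, crossedHom_map_one hδ, hg, mul_one, eq_comm,
      MulEquiv.map_eq_one_iff] at h

theorem mem_crossedHomKer {g : G} : g ∈ crossedHomKer hδ ↔ δ g = 1 := Iff.rfl

theorem isCompl_crossedHomKer [IsMulCommutative V] {n : ℕ} (hn : (Nat.card V).Coprime n)
    (hδV : ∀ v : V, δ v = v ^ n) : IsCompl V (crossedHomKer hδ) := by
  refine ⟨disjoint_iff_inf_le.mpr fun v ⟨hvV, hv⟩ => ?_, codisjoint_iff_le_sup.mpr fun g _ => ?_⟩
  · have : (⟨v, hvV⟩ : V) ^ n = 1 ^ n := by rw [← hδV, one_pow]; exact hv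
    simpa using (powCoprime hn).injective this
  · obtain ⟨r, hr⟩ : ∃ r : V, r ^ n = δ g := (powCoprime hn).surjective (δ g)
    have hconj : MulAut.conjNormal ((r⁻¹ : V) : G) (δ g) = δ g := by
      ext
      rw [MulAut.conjNormal_apply, mul_inv_eq_iff_eq_mul]
      exact congrArg Subtype.val (mul_comm r⁻¹ (δ g))
    have hrg : δ (r⁻¹ * g) = 1 := by
      rw [hδ, hδV, hconj, inv_pow, hr, mul_inv_cancel]
    simpa using mul_mem_sup r.2 ((mem_crossedHomKer hδ).mpr hrg)

end CrossedHom

structure IsEquivariantSection (V U : Subgroup G) (s : G → G) : Prop where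
  inv_mul_mem (x : G) : x⁻¹ * s x ∈ V
  apply_mul_of_mem_left {x v : G} (hv : v ∈ V) : s (x * v) = s x
  apply_mul_of_mem_right {x u : G} (hu : u ∈ U) : s (x * u) = s x * u

theorem exists_isEquivariantSection {V U : Subgroup G} [V.Normal] (hVU : Disjoint V U) :
    ∃ s : G → G, IsEquivariantSection V U s := by
  let r : G → G := fun x => (x : G ⧸ (V ⊔ U)).out
  have hr (x : G) : (r x)⁻¹ * x ∈ V ⊔ U := QuotientGroup.eq.mp (QuotientGroup.out_eq' _)
  have hr_mul {x p : G} (hp : p ∈ V ⊔ U) : r (x * p) = r x := by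
    simp only [r, QuotientGroup.mk_mul_of_mem x hp]
  have hex (x : G) : ∃ y, (r x)⁻¹ * y ∈ U ∧ x⁻¹ * y ∈ V := by
    have hx : (r x)⁻¹ * x ∈ ((U ⊔ V : Subgroup G) : Set G) := sup_comm V U ▸ hr x
    obtain ⟨u, hu, v, hv, huv⟩ := (mul_normal U V ▸ hx : (r x)⁻¹ * x ∈ (U : Set G) * (V : Set G))
    refine ⟨r x * u, by simpa using hu, ?_⟩
    rw [← inv_mem_iff]
    simpa [← mul_assoc, ← huv] using hv
  choose s hsU hsV using hex
  have hs_unique {x y : G} (hyU : (r x)⁻¹ * y ∈ U) (hyV : x⁻¹ * y ∈ V) : y = s x := by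
    have hV : y⁻¹ * s x ∈ V := by simpa [mul_assoc] using mul_mem (inv_mem hyV) (hsV x)
    have hU : y⁻¹ * s x ∈ U := by simpa [mul_assoc] using mul_mem (inv_mem hyU) (hsU x)
    exact inv_mul_eq_one.mp (disjoint_def.mp hVU hV hU)
  refine ⟨s, hsV, fun {x v} hv => (hs_unique ?_ ?_).symm, fun {x u} hu => (hs_unique ?_ ?_).symm⟩
  · rw [hr_mul (mem_sup_left hv)]
    exact hsU x
  · simpa [mul_assoc] using mul_mem (inv_mem hv) (hsV x)
  · rw [hr_mul (mem_sup_right hu), ← mul_assoc]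
    exact mul_mem (hsU x) hu
  · simpa [mul_assoc] using Normal.conj_mem inferInstance _ (hsV x) u⁻¹

namespace IsEquivariantSection

variable {V U : Subgroup G} [V.Normal] {s : G → G} (hs : IsEquivariantSection V U s)

include hs in
theorem mul_apply_inv_mul_mul_inv_mem (g x : G) : g * s (g⁻¹ * x) * (s x)⁻¹ ∈ V := by
  have := Normal.conj_mem inferInstance _
    (mul_mem (hs.inv_mul_mem (g⁻¹ * x)) (inv_mem (hs.inv_mul_mem x))) x
  convert this using 1
  group

noncomputable def diffAt (g x : G) : V :=
  ⟨g * s (g⁻¹ * x) * (s x)⁻¹, hs.mul_apply_inv_mul_mul_inv_mem g x⟩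

theorem diffAt_mul_of_mem (g : G) {x p : G} (hp : p ∈ V ⊔ U) :
    hs.diffAt g (x * p) = hs.diffAt g x := by
  obtain ⟨v, hv, u, hu, rfl⟩ := (normal_mul V U ▸ hp : p ∈ (V : Set G) * (U : Set G))
  ext
  simp only [diffAt, ← mul_assoc, hs.apply_mul_of_mem_right hu, hs.apply_mul_of_mem_left hv]
  group

theorem diffAt_eq_of_mk_eq (g : G) {x y : G} (h : (x : G ⧸ (V ⊔ U)) = y) :
    hs.diffAt g x = hs.diffAt g y := by
  rw [← hs.diffAt_mul_of_mem g (QuotientGroup.eq.mp h), mul_inv_cancel_left]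

theorem diffAt_mul (g h x : G) :
    hs.diffAt (g * h) x = MulAut.conjNormal g (hs.diffAt h (g⁻¹ * x)) * hs.diffAt g x := by
  ext
  simp only [diffAt, coe_mul, MulAut.conjNormal_apply, mul_inv_rev]
  group

theorem diffAt_of_mem {v : G} (hv : v ∈ V) (x : G) : hs.diffAt v x = ⟨v, hv⟩ := by
  have hx : s (v⁻¹ * x) = s x := by
    simpa [mul_assoc] using
      hs.apply_mul_of_mem_left (x := x) (Normal.conj_mem inferInstance _ (inv_mem hv) x⁻¹)
  ext
  simp [diffAt, hx]

variable [IsMulCommutative V] [Fintype (G ⧸ (V ⊔ U))]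

noncomputable def diff (g : G) : V :=
  ∏ q : G ⧸ (V ⊔ U), hs.diffAt g q.out

theorem diff_mul (g h : G) : hs.diff (g * h) = MulAut.conjNormal g (hs.diff h) * hs.diff g := by
  have hreindex : ∏ q : G ⧸ (V ⊔ U), hs.diffAt h (g⁻¹ * q.out) = hs.diff h :=
    Fintype.prod_equiv (MulAction.toPerm g⁻¹) _ _ fun q => hs.diffAt_eq_of_mk_eq h <| by
      rw [MulAction.toPerm_apply, QuotientGroup.out_eq']
      exact MulAction.Quotient.mk_smul_out _ g⁻¹ q
  simp only [diff, diffAt_mul, Finset.prod_mul_distrib, ← map_prod, hreindex]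

theorem diff_of_mem (v : V) : hs.diff v = v ^ (V ⊔ U).index := by
  simp [diff, hs.diffAt_of_mem v.2, index, Nat.card_eq_fintype_card]

end IsEquivariantSection

theorem exists_isCompl_of_disjoint_of_coprime_index {V U : Subgroup G} [V.Normal]
    [IsMulCommutative V] [(V ⊔ U).FiniteIndex] (hVU : Disjoint V U)
    (hcop : (Nat.card V).Coprime (V ⊔ U).index) : ∃ C : Subgroup G, IsCompl V C := by
  let := (V ⊔ U).fintypeQuotientOfFiniteIndex
  obtain ⟨s, hs⟩ := exists_isEquivariantSection hVU
  exact ⟨_, isCompl_crossedHomKer hs.diff_mul hcop hs.diff_of_mem⟩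

end Subgroup

/-- **Gaschütz' theorem.** Let `p` be a prime, `V` a normal abelian `p`-subgroup of a finite
group `G`, and `P` a Sylow `p`-subgroup of `G`. Then `G` splits over `V` if and only if
`P` splits over `V`. -/
theorem gaschuetz_split_iff (p : ℕ) [Fact p.Prime] (G : Type*) [Group G] [Finite G]
    (V : Subgroup G) [V.Normal] (hV : IsPGroup p V) (hVab : IsMulCommutative V)
    (P : Sylow p G) :
    (∃ C : Subgroup G, V ⊓ C = ⊥ ∧ V ⊔ C = ⊤) ↔
      (∃ C : Subgroup G, C ≤ P ∧ V ⊓ C = ⊥ ∧ V ⊔ C = (P : Subgroup G)) := by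
  have hVP : V ≤ P := hV.le_sylow_of_normal P
  constructor
  · rintro ⟨C, hVC, hVC_top⟩
    refine ⟨C ⊓ P, inf_le_right, ?_, ?_⟩
    · exact disjoint_iff.mp ((disjoint_iff.mpr hVC).mono_right inf_le_left)
    · rw [Subgroup.normal_sup_inf_of_le C hVP, hVC_top, top_inf_eq]
  · rintro ⟨C, -, hVC, hVC_P⟩
    have hcop : (Nat.card V).Coprime (V ⊔ C).index :=
      hVC_P ▸ P.card_coprime_index.coprime_dvd_left (Subgroup.card_dvd_of_le hVP)
    obtain ⟨K, hK⟩ :=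
      Subgroup.exists_isCompl_of_disjoint_of_coprime_index (disjoint_iff.mpr hVC) hcop
    exact ⟨K, hK.inf_eq_bot, hK.sup_eq_top⟩
end
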